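/- Let u0 : ℝⁿ → ℝ be Lipschitz and set ũ0 := S_T^-(S_T^+ u0). Then S_T^+ ũ0 = S_T^+ u0, and u0(x) ≥ ũ0(x) for all x ∈ ℝⁿ. -/

import Mathlib

open scoped RealInnerProductSpace
open Filter

noncomputable section

/-- `n`-dimensional Euclidean space. -/
abbrev Euc (n : ℕ) := EuclideanSpace ℝ (Fin n)

/-- A real-valued function on `ℝⁿ` is Lipschitz (with some constant). -/
def IsLip {n : ℕ} (f : Euc n → ℝ) : Prop := ∃ K : NNReal, LipschitzWith K f

/-- The Legendre transform `L(q) = sup_p (⟨q,p⟫ - H(p))`. -/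
def legendre {n : ℕ} (H : Euc n → ℝ) (q : Euc n) : ℝ :=
  ⨆ p : Euc n, (⟪q, p⟫ - H p)

/-- The forward Hopf–Lax operator `(S_T^+ g)(x) = inf_y [g(y) + T·L((x-y)/T)]`. -/
def Splus {n : ℕ} (T : ℝ) (L : Euc n → ℝ) (g : Euc n → ℝ) (x : Euc n) : ℝ :=
  ⨅ y : Euc n, (g y + T * L (T⁻¹ • (x - y)))

/-- The backward operator `(S_T^- g)(x) = sup_y [g(y) - T·L((y-x)/T)]`. -/
def Sminus {n : ℕ} (T : ℝ) (L : Euc n → ℝ) (g : Euc n → ℝ) (x : Euc n) : ℝ :=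
  ⨆ y : Euc n, (g y - T * L (T⁻¹ • (y - x)))

/-- The Hessian of `H` is positive definite at every point. -/
def PosDefHessian {n : ℕ} (H : Euc n → ℝ) : Prop :=
  ∀ p v : Euc n, v ≠ 0 → 0 < iteratedFDeriv ℝ 2 H p ![v, v]

/-- `H` is superlinear: `H(p)/‖p‖ → +∞` as `‖p‖ → +∞`. -/
def Superlinear {n : ℕ} (H : Euc n → ℝ) : Prop :=
  Tendsto (fun p : Euc n => H p / ‖p‖) (cocompact (Euc n)) atTop

/-!
Continuity and superlinearity of `H` make the Legendre transform `L` finite and give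
`L q ≥ c ‖q‖ - C` for every slope `c`; taking `c` a Lipschitz constant of `u0` makes `S_T^+ u0`
finite. The rest is order theory: `f ≤ S_T^+ g ↔ S_T^- f ≤ g` pointwise, since both say
`f x ≤ g y + T L((x - y)/T)` for all `x, y`. For this Galois connection the counit gives
`S_T^- S_T^+ u0 ≤ u0`, and then `S_T^+ S_T^- S_T^+ = S_T^+` follows as for any adjunction.
-/

section

variable {n : ℕ}

theorem tendsto_inner_sub_cocompact_atBot {H : Euc n → ℝ} (hHsuper : Superlinear H) (q : Euc n) :
    Tendsto (fun p => ⟪q, p⟫ - H p) (cocompact (Euc n)) atBot := by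
  refine tendsto_atBot_mono' _ ?_ (tendsto_neg_atTop_atBot.comp tendsto_norm_cocompact_atTop)
  filter_upwards [hHsuper.eventually_ge_atTop (‖q‖ + 1),
    tendsto_norm_cocompact_atTop.eventually_ge_atTop 1] with p hHp hp
  have hqp : ‖q‖ * ‖p‖ + ‖p‖ ≤ H p := by
    rw [le_div_iff₀ (by linarith)] at hHp
    linarith
  have := real_inner_le_norm q p
  simp only [Function.comp_apply]
  linarith

theorem bddAbove_range_inner_sub {H : Euc n → ℝ} (hHcont : Continuous H)
    (hHsuper : Superlinear H) (q : Euc n) :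
    BddAbove (Set.range fun p => ⟪q, p⟫ - H p) := by
  obtain ⟨p₀, hp₀⟩ := ((continuous_const.inner continuous_id).sub hHcont).exists_forall_ge
    (tendsto_inner_sub_cocompact_atBot hHsuper q)
  exact ⟨_, Set.forall_mem_range.2 hp₀⟩

theorem exists_mul_norm_sub_le_legendre {H : Euc n → ℝ} (hHcont : Continuous H)
    (hHsuper : Superlinear H) {c : ℝ} (hc : 0 ≤ c) :
    ∃ C, ∀ q, c * ‖q‖ - C ≤ legendre H q := by
  obtain ⟨C, hC⟩ := (isCompact_closedBall (0 : Euc n) c).bddAbove_image hHcont.continuousOn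
  refine ⟨C, fun q => ?_⟩
  -- test the supremum at the point of norm `≤ c` in the direction of `q`
  set p : Euc n := (c * ‖q‖⁻¹) • q
  have hp : ‖p‖ ≤ c := by
    rw [norm_smul, Real.norm_eq_abs, abs_of_nonneg (by positivity), mul_assoc]
    exact mul_le_of_le_one_right hc (inv_mul_le_one)
  have hqp : ⟪q, p⟫ = c * ‖q‖ := by
    rw [real_inner_smul_right, real_inner_self_eq_norm_sq]
    rcases eq_or_ne ‖q‖ 0 with h | h
    · simp [h]
    · field_simp
  have hHp : H p ≤ C := hC ⟨p, by simpa using hp, rfl⟩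
  have : ⟪q, p⟫ - H p ≤ legendre H q := le_ciSup (bddAbove_range_inner_sub hHcont hHsuper q) p
  linarith

theorem bddBelow_range_add_legendre {H : Euc n → ℝ} (hHcont : Continuous H)
    (hHsuper : Superlinear H) {K : NNReal} {u : Euc n → ℝ} (hu : LipschitzWith K u)
    {T : ℝ} (hT : 0 < T) (x : Euc n) :
    BddBelow (Set.range fun y => u y + T * legendre H (T⁻¹ • (x - y))) := by
  obtain ⟨C, hC⟩ := exists_mul_norm_sub_le_legendre hHcont hHsuper K.coe_nonneg
  refine ⟨u x - T * C, Set.forall_mem_range.2 fun y => ?_⟩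
  have hLip : u x - u y ≤ K * ‖x - y‖ := by
    simpa [dist_eq_norm] using (hu.dist_le_mul x y).trans' (le_abs_self _)
  have hL : K * ‖x - y‖ - T * C ≤ T * legendre H (T⁻¹ • (x - y)) := by
    have := mul_le_mul_of_nonneg_left (hC (T⁻¹ • (x - y))) hT.le
    rwa [norm_smul, Real.norm_eq_abs, abs_of_pos (inv_pos.2 hT), mul_sub, mul_left_comm,
      ← mul_assoc T, mul_inv_cancel₀ hT.ne', one_mul] at this
  linarith

section HopfLax

variable {T : ℝ} {L : Euc n → ℝ} {g : Euc n → ℝ}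

theorem Splus_le_add (hg : ∀ x, BddBelow (Set.range fun y => g y + T * L (T⁻¹ • (x - y))))
    (x y : Euc n) : Splus T L g x ≤ g y + T * L (T⁻¹ • (x - y)) :=
  ciInf_le (hg x) y

theorem Sminus_Splus_le (hg : ∀ x, BddBelow (Set.range fun y => g y + T * L (T⁻¹ • (x - y))))
    (y : Euc n) : Sminus T L (Splus T L g) y ≤ g y :=
  ciSup_le fun x => sub_le_iff_le_add.2 (Splus_le_add hg x y)

theorem Splus_le_Sminus_Splus_add
    (hg : ∀ x, BddBelow (Set.range fun y => g y + T * L (T⁻¹ • (x - y)))) (x y : Euc n) :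
    Splus T L g x ≤ Sminus T L (Splus T L g) y + T * L (T⁻¹ • (x - y)) := by
  have hbdd : BddAbove (Set.range fun x => Splus T L g x - T * L (T⁻¹ • (x - y))) :=
    ⟨g y, Set.forall_mem_range.2 fun x => sub_le_iff_le_add.2 (Splus_le_add hg x y)⟩
  exact sub_le_iff_le_add.1 (le_ciSup hbdd x)

theorem Splus_Sminus_Splus
    (hg : ∀ x, BddBelow (Set.range fun y => g y + T * L (T⁻¹ • (x - y)))) :
    Splus T L (Sminus T L (Splus T L g)) = Splus T L g := by
  funext x
  refine le_antisymm ?_ (le_ciInf fun y => Splus_le_Sminus_Splus_add hg x y)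
  refine ciInf_mono ⟨Splus T L g x, ?_⟩ fun y => by gcongr; exact Sminus_Splus_le hg y
  exact Set.forall_mem_range.2 fun y => Splus_le_Sminus_Splus_add hg x y

end HopfLax

end

theorem backward_stability
    {n : ℕ} (T : ℝ) (hT : 0 < T)
    (H : Euc n → ℝ) (hH : ContDiff ℝ 2 H)
    (hHsuper : Superlinear H)
    (u0 : Euc n → ℝ) (hu0 : IsLip u0) :
    Splus T (legendre H) (Sminus T (legendre H) (Splus T (legendre H) u0)) =
        Splus T (legendre H) u0 ∧
      ∀ x : Euc n, Sminus T (legendre H) (Splus T (legendre H) u0) x ≤ u0 x := by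
  obtain ⟨K, hK⟩ := hu0
  have hbdd := bddBelow_range_add_legendre hH.continuous hHsuper hK hT
  exact ⟨Splus_Sminus_Splus hbdd, Sminus_Splus_le hbdd⟩
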